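/- Let G = (V,E) be a graph and G' its d-inflation (each edge replaced by a chain of 2d new vertices). For a stabilizer element S = ∏_{u∈U} g_u of the graph state of G with sign χ (so S = χ ⊗_v σ_v), the inflated stabilizer element S' = ∏_{u∈U} f_u of the graph state of G', where f_u = g'_u ∏_{(u,v)∈E, s=1..d} g'_{(2s)_{(u,v)}}, has Pauli-product representation with the same sign χ; moreover, its Pauli operator on each power vertex u equals σ_u, and on each chain vertex it is either X or I. -/

import Mathlib

open scoped Classical

inductive Pauli | I | X | Y | Z
deriving DecidableEq

noncomputable def pauliMat : Pauli → Matrix (Fin 2) (Fin 2) ℂ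
  | Pauli.I => 1
  | Pauli.X => !![0, 1; 1, 0]
  | Pauli.Y => !![0, -Complex.I; Complex.I, 0]
  | Pauli.Z => !![1, 0; 0, -1]

noncomputable def pauliProd {V : Type} [Fintype V] [DecidableEq V] (σ : V → Pauli) :
    Matrix (V → Fin 2) (V → Fin 2) ℂ :=
  fun f g => ∏ v, pauliMat (σ v) (f v) (g v)

noncomputable def graphGen {V : Type} [Fintype V] [DecidableEq V] (G : SimpleGraph V) (v : V) :
    Matrix (V → Fin 2) (V → Fin 2) ℂ :=
  pauliProd (fun u => if u = v then Pauli.X else if G.Adj u v then Pauli.Z else Pauli.I)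

noncomputable def graphState {V : Type} [Fintype V] [DecidableEq V] (G : SimpleGraph V) :
    (V → Fin 2) → ℂ :=
  fun f => (-1 : ℂ) ^ (∑ e ∈ G.edgeFinset,
      Sym2.lift ⟨fun u v => (f u : ℕ) * (f v : ℕ), fun u v => Nat.mul_comm _ _⟩ e) /
    (Real.sqrt (2 ^ Fintype.card V) : ℂ)

noncomputable def expVal {V : Type} [Fintype V] [DecidableEq V]
    (ψ : (V → Fin 2) → ℂ) (P : Matrix (V → Fin 2) (V → Fin 2) ℂ) : ℂ :=
  ∑ f, ∑ g, (starRingEnd ℂ) (ψ f) * P f g * ψ g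

/-- The original graph on `V` determined by an oriented edge list `e`. -/
def origGraph {V : Type} (m : ℕ) (e : Fin m → V × V) : SimpleGraph V :=
  SimpleGraph.fromRel (fun u v => ∃ j, e j = (u, v))

/-- Adjacency seed relation of the `d`-inflated graph: each oriented edge `e j` is
replaced by a chain of `2d` chain vertices `(j, 0), …, (j, 2d - 1)` joining its
endpoints. -/
def inflAdj {V : Type} (m d : ℕ) (e : Fin m → V × V) :
    (V ⊕ (Fin m × Fin (2 * d))) → (V ⊕ (Fin m × Fin (2 * d))) → Prop
  | Sum.inl u, Sum.inr (j, r) =>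
      ((e j).1 = u ∧ (r : ℕ) = 0) ∨ ((e j).2 = u ∧ (r : ℕ) = 2 * d - 1)
  | Sum.inr (j, r), Sum.inr (j', r') => j = j' ∧ (r : ℕ) + 1 = (r' : ℕ)
  | _, _ => False

/-- The `d`-inflated graph. -/
def inflGraph {V : Type} (m d : ℕ) (e : Fin m → V × V) :
    SimpleGraph (V ⊕ (Fin m × Fin (2 * d))) :=
  SimpleGraph.fromRel (inflAdj m d e)

/-- The stabilizer generator of the inflated graph state at the chain vertex of
edge `j` with (0-indexed) position `r`; `1` if `r` is out of range. -/
noncomputable def chainGen {V : Type} [Fintype V] [DecidableEq V] (m d : ℕ)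
    (e : Fin m → V × V) (j : Fin m) (r : ℕ) :
    Matrix ((V ⊕ (Fin m × Fin (2 * d))) → Fin 2) ((V ⊕ (Fin m × Fin (2 * d))) → Fin 2) ℂ :=
  if h : r < 2 * d then graphGen (inflGraph m d e) (Sum.inr (j, ⟨r, h⟩)) else 1

/-- The inflated generator element
`f_u = g'_u ∏_{(u,v) ∈ E} ∏_{s=1}^{d} g'_{(2s)_{(u,v)}}`; the chain vertex at
distance `2s` from `u` has 0-indexed position `2s - 1` if `e j = (u, v)` and
`2d - 2s` if `e j = (v, u)`. -/
noncomputable def inflGen {V : Type} [Fintype V] [DecidableEq V] (m d : ℕ)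
    (e : Fin m → V × V) (u : V) :
    Matrix ((V ⊕ (Fin m × Fin (2 * d))) → Fin 2) ((V ⊕ (Fin m × Fin (2 * d))) → Fin 2) ℂ :=
  graphGen (inflGraph m d e) (Sum.inl u) *
    ((List.finRange m).map (fun j =>
      ((List.range d).map (fun s =>
        if (e j).1 = u then chainGen m d e j (2 * s + 1)
        else if (e j).2 = u then chainGen m d e j (2 * d - 2 * s - 2)
        else 1)).prod)).prod

/-- The inflated measurement: the original Pauli on power vertices, `X` on all
chain vertices. -/
def inflMeas {V : Type} {m d : ℕ} (M : V → Pauli) : (V ⊕ (Fin m × Fin (2 * d))) → Pauli :=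
  Sum.elim M (fun _ => Pauli.X)


/-!
The element `f_u` is the product of the generators `g'_a` of the inflated graph over the list
`S_u` formed by `u` and the chain vertices at even distance from `u`. No two vertices of `S_u`
are adjacent, so at each vertex the factors are all `X`/`I` or all `Z`/`I`: `f_u` carries no
phase, it is `X` on `S_u` and, off `S_u`, `Z` to the parity of the number of neighbours in `S_u`.
A chain vertex off `S_u` has exactly two such neighbours and a power vertex `w ≠ u` has one per
edge between `u` and `w`, so `f_u` agrees with `g_u` on the power vertices and is `X` or `I` on
the chain vertices. Multiplying over `U`, the power vertices see exactly the single-site products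
of `S`, which carry the sign `χ`, while the chain vertices only see the commuting `X` and `I`.
-/

section PiKron

variable {W n R : Type*} [Fintype W] [CommSemiring R]

def piKron (A : W → Matrix n n R) : Matrix (W → n) (W → n) R :=
  fun f g => ∏ v, A v (f v) (g v)

theorem piKron_one [DecidableEq n] : piKron (1 : W → Matrix n n R) = 1 := by
  ext f g
  simp only [piKron, Pi.one_apply, Matrix.one_apply, Finset.prod_boole, Finset.mem_univ,
    true_implies, funext_iff]

theorem piKron_mul [DecidableEq W] [Fintype n] (A B : W → Matrix n n R) :
    piKron (A * B) = piKron A * piKron B := by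
  ext f g
  simp only [piKron, Pi.mul_apply, Matrix.mul_apply, Fintype.prod_sum, Finset.prod_mul_distrib]

def piKronHom [DecidableEq W] [Fintype n] [DecidableEq n] :
    (W → Matrix n n R) →* Matrix (W → n) (W → n) R where
  toFun := piKron
  map_one' := piKron_one
  map_mul' := piKron_mul

theorem list_prod_map_piKron [DecidableEq W] [Fintype n] [DecidableEq n] {ι : Type*}
    (L : List ι) (A : ι → W → Matrix n n R) :
    (L.map fun i => piKron (A i)).prod = piKron fun v => (L.map fun i => A i v).prod := by
  have h := map_list_prod (piKronHom (R := R)) (L.map A)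
  rw [List.map_map] at h
  refine h.symm.trans (congrArg piKron (funext fun v => ?_))
  rw [Pi.list_prod_apply, List.map_map]
  rfl

theorem piKron_sumElim_apply {W' : Type*} [Fintype W']
    (A : W → Matrix n n R) (B : W' → Matrix n n R) (f g : W ⊕ W' → n) :
    piKron (Sum.elim A B) f g =
      piKron A (f ∘ Sum.inl) (g ∘ Sum.inl) * piKron B (f ∘ Sum.inr) (g ∘ Sum.inr) :=
  Fintype.prod_sum_type _

theorem piKron_sumElim_eq_smul {W' : Type*} [Fintype W']
    {A A' : W → Matrix n n R} {c : R} (h : piKron A = c • piKron A') (B : W' → Matrix n n R) :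
    piKron (Sum.elim A B) = c • piKron (Sum.elim A' B) := by
  ext f g
  rw [Matrix.smul_apply, piKron_sumElim_apply, piKron_sumElim_apply, h, Matrix.smul_apply,
    smul_eq_mul, smul_eq_mul, mul_assoc]

end PiKron

theorem pow_eq_ite_even {M : Type*} [Monoid M] {x : M} (hx : x * x = 1) (k : ℕ) :
    x ^ k = if Even k then 1 else x := by
  obtain ⟨l, rfl | rfl⟩ := Nat.even_or_odd' k
  · simp [pow_mul, sq, hx]
  · simp [pow_succ, pow_mul, hx]

theorem List.prod_map_ite_eq_pow_countP {ι M : Type*} [Monoid M] (l : List ι) (p : ι → Prop)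
    [DecidablePred p] (x : M) :
    (l.map fun i => if p i then x else 1).prod = x ^ l.countP (p ·) := by
  induction l with
  | nil => simp
  | cons i l ih =>
    by_cases h : p i <;> simp [h, ih, pow_succ']

theorem List.countP_finRange_eq_card_filter (d : ℕ) (p : ℕ → Prop) [DecidablePred p] :
    (List.finRange d).countP (fun s : Fin d => p s) = ((Finset.range d).filter p).card := by
  have : (List.finRange d).countP (fun s : Fin d => p s) =
      (List.range d).countP (fun s => p s) := by
    rw [← List.map_coe_finRange_eq_range, List.countP_map]
    rfl
  rw [this, Finset.card_def, Finset.filter_val, Finset.range_val, Multiset.range,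
    Multiset.filter_coe, Multiset.coe_card, List.countP_eq_length_filter]

-- `p` is the position of a chain vertex counted from `u`; its neighbours in `S_u` are the chain
-- vertices at the odd positions `p ± 1`, and `u` itself when `p = 0`.
theorem even_chain_neighbour_count (d p : ℕ) (hp : p < 2 * d) :
    Even (((Finset.range d).filter fun s => p + 1 = 2 * s + 1 ∨ 2 * s + 2 = p).card +
      if p = 0 then 1 else 0) := by
  obtain ⟨t, rfl | rfl⟩ := Nat.even_or_odd' p
  · rcases Nat.eq_zero_or_pos t with rfl | ht
    · rw [show (Finset.range d).filter (fun s => 2 * 0 + 1 = 2 * s + 1 ∨ 2 * s + 2 = 2 * 0) = {0}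
        by ext s; simp [show 0 < d by omega]]
      simp
    · rw [show (Finset.range d).filter (fun s => 2 * t + 1 = 2 * s + 1 ∨ 2 * s + 2 = 2 * t) =
        {t, t - 1} by ext s; simp; omega, Finset.card_pair (by omega), if_neg (by omega)]
      simp
  · rw [show (Finset.range d).filter
        (fun s => 2 * t + 1 + 1 = 2 * s + 1 ∨ 2 * s + 2 = 2 * t + 1) = ∅ by ext s; simp; omega]
    simp

theorem pauliMat_X_mul_self : pauliMat .X * pauliMat .X = 1 := by
  simp [pauliMat, Matrix.one_fin_two]

theorem pauliMat_Z_mul_self : pauliMat .Z * pauliMat .Z = 1 := by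
  simp [pauliMat, Matrix.one_fin_two]

theorem exists_list_prod_pauliMat_eq_X_or_I {ι : Type*} (L : List ι) (f : ι → Pauli)
    (hf : ∀ i ∈ L, f i = .X ∨ f i = .I) :
    ∃ q, (L.map fun i => pauliMat (f i)).prod = pauliMat q ∧ (q = .X ∨ q = .I) := by
  induction L with
  | nil => exact ⟨.I, rfl, .inr rfl⟩
  | cons i L ih =>
    obtain ⟨q, hq, hqXI⟩ := ih fun i hi => hf i (List.mem_cons_of_mem _ hi)
    rw [List.map_cons, List.prod_cons, hq]
    rcases hf i List.mem_cons_self with hi | hi <;> rw [hi]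
    · rcases hqXI with rfl | rfl
      · exact ⟨.I, pauliMat_X_mul_self, .inr rfl⟩
      · exact ⟨.X, mul_one _, .inl rfl⟩
    · exact ⟨q, one_mul _, hqXI⟩

section GraphGen

variable {W : Type} [DecidableEq W]

theorem pauliProd_eq_piKron [Fintype W] (σ : W → Pauli) :
    pauliProd σ = piKron fun v => pauliMat (σ v) :=
  rfl

noncomputable def graphWord (G : SimpleGraph W) (v : W) : W → Pauli :=
  fun u => if u = v then .X else if G.Adj u v then .Z else .I

noncomputable def indepWord (G : SimpleGraph W) (L : List W) (v : W) : Pauli :=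
  if Odd (L.countP (· = v)) then .X else if Odd (L.countP (G.Adj v ·)) then .Z else .I

theorem indepWord_eq_pauliMat_list_prod (G : SimpleGraph W) {L : List W}
    (hL : G.IsIndepSet {a | a ∈ L}) (v : W) :
    pauliMat (indepWord G L v) = (L.map fun a => pauliMat (graphWord G a v)).prod := by
  by_cases hv : v ∈ L
  · have hnadj : L.countP (G.Adj v ·) = 0 :=
      List.countP_eq_zero.2 fun a ha hadj =>
        hL hv ha (G.ne_of_adj (of_decide_eq_true hadj)) (of_decide_eq_true hadj)
    have hfactor : ∀ a ∈ L, pauliMat (graphWord G a v) = if a = v then pauliMat .X else 1 := by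
      intro a ha
      by_cases hav : a = v
      · simp [graphWord, hav]
      · have : ¬G.Adj v a := fun hadj => hL hv ha (Ne.symm hav) hadj
        simp [graphWord, Ne.symm hav, hav, this, pauliMat]
    rw [List.map_congr_left hfactor, List.prod_map_ite_eq_pow_countP,
      pow_eq_ite_even pauliMat_X_mul_self, indepWord, hnadj]
    by_cases hc : Even (L.countP (· = v)) <;> simp [hc, pauliMat, ← Nat.not_even_iff_odd]
  · have hfactor :
        ∀ a ∈ L, pauliMat (graphWord G a v) = if G.Adj v a then pauliMat .Z else 1 := by
      intro a ha
      have hav : v ≠ a := fun h => hv (h ▸ ha)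
      by_cases hadj : G.Adj v a <;> simp [graphWord, hav, hadj, pauliMat]
    have hcount : L.countP (· = v) = 0 := by
      rw [List.countP_eq_zero]
      rintro a ha h
      exact hv (of_decide_eq_true h ▸ ha)
    rw [List.map_congr_left hfactor, List.prod_map_ite_eq_pow_countP,
      pow_eq_ite_even pauliMat_Z_mul_self, indepWord, hcount]
    by_cases hc : Even (L.countP (G.Adj v ·)) <;> simp [hc, pauliMat, ← Nat.not_even_iff_odd]

theorem list_prod_graphGen_of_isIndepSet [Fintype W] (G : SimpleGraph W) {L : List W}
    (hL : G.IsIndepSet {a | a ∈ L}) :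
    (L.map (graphGen G)).prod = pauliProd (indepWord G L) := by
  change (L.map fun a => pauliProd (graphWord G a)).prod = _
  simp only [pauliProd_eq_piKron, list_prod_map_piKron, indepWord_eq_pauliMat_list_prod G hL]

end GraphGen

section Inflation

variable {V : Type} (m d : ℕ) (e : Fin m → V × V)

theorem inflGraph_not_adj_inl_inl (u w : V) : ¬(inflGraph m d e).Adj (.inl u) (.inl w) := by
  simp [inflGraph, inflAdj]

theorem inflGraph_adj_inl_inr (u : V) (j : Fin m) (k : Fin (2 * d)) :
    (inflGraph m d e).Adj (.inl u) (.inr (j, k)) ↔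
      (e j).1 = u ∧ (k : ℕ) = 0 ∨ (e j).2 = u ∧ (k : ℕ) = 2 * d - 1 := by
  simp [inflGraph, inflAdj]

theorem inflGraph_adj_inr_inr (j j' : Fin m) (k k' : Fin (2 * d)) :
    (inflGraph m d e).Adj (.inr (j, k)) (.inr (j', k')) ↔
      j = j' ∧ ((k : ℕ) + 1 = k' ∨ (k' : ℕ) + 1 = k) := by
  simp only [inflGraph, inflAdj, SimpleGraph.fromRel_adj, ne_eq, Sum.inr.injEq, Prod.mk.injEq]
  constructor
  · rintro ⟨-, ⟨rfl, h⟩ | ⟨rfl, h⟩⟩ <;> simp [h]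
  · rintro ⟨rfl, h⟩
    refine ⟨fun hjk => ?_, by omega⟩
    have := congrArg Fin.val hjk.2
    omega

variable [DecidableEq V]

-- The chain vertex `(2 (s + 1))_{e j}` counted from the endpoint `u` of `e j`.
def chainPos (u : V) (j : Fin m) (s : Fin d) : Fin (2 * d) :=
  if (e j).1 = u then ⟨2 * s + 1, by omega⟩ else ⟨2 * d - 2 * s - 2, by omega⟩

def inflGenSupport (u : V) : List (V ⊕ (Fin m × Fin (2 * d))) :=
  .inl u :: (List.finRange m).flatMap fun j =>
    if (e j).1 = u ∨ (e j).2 = u then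
      (List.finRange d).map fun s => .inr (j, chainPos m d e u j s)
    else []

theorem inflGen_eq_list_prod [Fintype V] (u : V) :
    inflGen m d e u = ((inflGenSupport m d e u).map (graphGen (inflGraph m d e))).prod := by
  rw [inflGen, inflGenSupport, List.map_cons, List.prod_cons, List.flatMap, List.map_flatten,
    List.prod_flatten, List.map_map, List.map_map]
  congr 2
  refine List.map_congr_left fun j _ => ?_
  rw [← List.map_coe_finRange_eq_range, List.map_map]
  by_cases h : (e j).1 = u ∨ (e j).2 = u
  · simp only [Function.comp_apply, if_pos h, List.map_map]
    refine congrArg List.prod (List.map_congr_left fun s _ => ?_)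
    by_cases h1 : (e j).1 = u
    · simp only [h1, chainPos, chainGen, if_true]
      exact dif_pos (by beta_reduce; omega)
    · simp only [h1, h.resolve_left h1, chainPos, chainGen, if_true, if_false]
      exact dif_pos (by beta_reduce; omega)
  · simp [not_or.1 h, Function.comp_def]

theorem chainPos_val (u : V) (j : Fin m) (s : Fin d) :
    (chainPos m d e u j s : ℕ) =
      if (e j).1 = u then 2 * (s : ℕ) + 1 else 2 * d - 2 * s - 2 := by
  unfold chainPos
  split_ifs <;> rfl

theorem mem_inflGenSupport {u : V} {c : V ⊕ (Fin m × Fin (2 * d))}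
    (hc : c ∈ inflGenSupport m d e u) :
    c = .inl u ∨
      ∃ j s, ((e j).1 = u ∨ (e j).2 = u) ∧ c = .inr (j, chainPos m d e u j s) := by
  rw [inflGenSupport, List.mem_cons, List.mem_flatMap] at hc
  rcases hc with rfl | ⟨j, -, hj⟩
  · exact .inl rfl
  · split_ifs at hj with h
    · obtain ⟨s, -, rfl⟩ := List.mem_map.1 hj
      exact .inr ⟨j, s, h, rfl⟩
    · simp at hj

theorem not_adj_inl_chainPos (hloop : ∀ j, (e j).1 ≠ (e j).2) (u : V) (j : Fin m) (s : Fin d) :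
    ¬(inflGraph m d e).Adj (.inl u) (.inr (j, chainPos m d e u j s)) := by
  rw [inflGraph_adj_inl_inr, chainPos_val]
  have hs := s.isLt
  by_cases h1 : (e j).1 = u
  · simp [h1, Ne.symm (h1 ▸ hloop j)]
  · simp [h1]
    omega

theorem isIndepSet_inflGenSupport (hloop : ∀ j, (e j).1 ≠ (e j).2) (u : V) :
    (inflGraph m d e).IsIndepSet {c | c ∈ inflGenSupport m d e u} := by
  intro a ha b hb hab hadj
  rcases mem_inflGenSupport m d e ha with rfl | ⟨j, s, -, rfl⟩ <;>
    rcases mem_inflGenSupport m d e hb with rfl | ⟨j', s', -, rfl⟩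
  · exact hab rfl
  · exact not_adj_inl_chainPos m d e hloop u j' s' hadj
  · exact not_adj_inl_chainPos m d e hloop u j s hadj.symm
  · obtain ⟨rfl, h⟩ := (inflGraph_adj_inr_inr m d e _ _ _ _).1 hadj
    rw [chainPos_val, chainPos_val] at h
    split_ifs at h <;> omega

theorem countP_adj_inl_inflGenSupport (hd : 0 < d) (hloop : ∀ j, (e j).1 ≠ (e j).2) (u w : V) :
    (inflGenSupport m d e u).countP (fun c => (inflGraph m d e).Adj (.inl w) c) =
      ∑ j, if e j = (u, w) ∨ e j = (w, u) then 1 else 0 := by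
  rw [inflGenSupport, List.countP_cons, List.countP_flatMap, ← Fin.sum_univ_def]
  simp only [inflGraph_not_adj_inl_inl, decide_false, Bool.false_eq_true, if_false, add_zero]
  refine Finset.sum_congr rfl fun j _ => ?_
  by_cases h : (e j).1 = u ∨ (e j).2 = u
  · have hadj : ∀ s : Fin d, (inflGraph m d e).Adj (.inl w) (.inr (j, chainPos m d e u j s)) ↔
        (e j = (u, w) ∨ e j = (w, u)) ∧ (s : ℕ) = d - 1 := by
      intro s
      have hs := s.isLt
      have hfwd : 2 * (s : ℕ) + 1 = 2 * d - 1 ↔ (s : ℕ) = d - 1 := by omega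
      have hbwd : 2 * d - 2 * (s : ℕ) - 2 = 0 ↔ (s : ℕ) = d - 1 := by omega
      have hbwd' : 2 * d - 2 * (s : ℕ) - 2 ≠ 2 * d - 1 := by omega
      rw [inflGraph_adj_inl_inr, chainPos_val, Prod.ext_iff, Prod.ext_iff]
      by_cases h1 : (e j).1 = u
      · simp [h1, Ne.symm (h1 ▸ hloop j), hfwd]
      · simp [h1, h.resolve_left h1, hbwd, hbwd']
    simp only [Function.comp_apply, if_pos h, List.countP_map]
    rw [List.countP_congr (q := fun s : Fin d =>
          decide ((e j = (u, w) ∨ e j = (w, u)) ∧ (s : ℕ) = d - 1))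
        (fun s _ => by simpa using hadj s),
      List.countP_finRange_eq_card_filter d (fun n => (e j = (u, w) ∨ e j = (w, u)) ∧ n = d - 1)]
    by_cases hP : e j = (u, w) ∨ e j = (w, u) <;> simp [hP, hd]
  · simp only [Function.comp_apply, if_neg h, List.countP_nil]
    rw [if_neg]
    rintro (h' | h') <;> simp [h'] at h

theorem even_countP_adj_inr_inflGenSupport (hloop : ∀ j, (e j).1 ≠ (e j).2) (u : V) (j : Fin m)
    (k : Fin (2 * d)) :
    Even ((inflGenSupport m d e u).countP (fun c => (inflGraph m d e).Adj (.inr (j, k)) c)) := by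
  rw [inflGenSupport, List.countP_cons, List.countP_flatMap, ← Fin.sum_univ_def,
    Finset.sum_eq_single j]
  · simp only [Function.comp_apply]
    rw [(inflGraph m d e).adj_comm, inflGraph_adj_inl_inr]
    by_cases h : (e j).1 = u ∨ (e j).2 = u
    · set p := if (e j).1 = u then (k : ℕ) else 2 * d - 1 - k with hp
      have hk := k.isLt
      have hhead :
          (e j).1 = u ∧ (k : ℕ) = 0 ∨ (e j).2 = u ∧ (k : ℕ) = 2 * d - 1 ↔ p = 0 := by
        by_cases h1 : (e j).1 = u
        · simp [hp, h1, Ne.symm (h1 ▸ hloop j)]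
        · simp [hp, h1, h.resolve_left h1]
          omega
      have hadj : ∀ s : Fin d,
          (inflGraph m d e).Adj (.inr (j, k)) (.inr (j, chainPos m d e u j s)) ↔
            p + 1 = 2 * s + 1 ∨ 2 * s + 2 = p := by
        intro s
        have hs := s.isLt
        rw [inflGraph_adj_inr_inr, chainPos_val]
        by_cases h1 : (e j).1 = u
        · simp [hp, h1]
        · simp [hp, h1]
          omega
      simp only [if_pos h, List.countP_map]
      rw [List.countP_congr (q := fun s : Fin d => decide (p + 1 = 2 * s + 1 ∨ 2 * s + 2 = p))
          (fun s _ => by simpa using hadj s),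
        List.countP_finRange_eq_card_filter d (fun n => p + 1 = 2 * n + 1 ∨ 2 * n + 2 = p)]
      simpa [hhead] using even_chain_neighbour_count d p (by rw [hp]; split_ifs <;> omega)
    · simp [not_or.1 h]
  · intro j' _ hj'
    simp only [Function.comp_apply]
    split_ifs
    · rw [List.countP_eq_zero]
      simp [inflGraph_adj_inr_inr, Ne.symm hj']
    · rfl
  · simp

theorem odd_sum_edge_indicator_iff (hinj : Function.Injective e)
    (hor : ∀ j j', e j ≠ ((e j').2, (e j').1)) {u w : V} (hw : w ≠ u) :
    Odd (∑ j, if e j = (u, w) ∨ e j = (w, u) then 1 else 0) ↔ (origGraph m e).Adj w u := by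
  rw [Finset.sum_boole, Nat.cast_id, origGraph, SimpleGraph.fromRel_adj]
  set edges := (Finset.univ : Finset (Fin m)).filter fun j => e j = (u, w) ∨ e j = (w, u)
  have hle : edges.card ≤ 1 := by
    refine Finset.card_le_one.2 fun a ha b hb => ?_
    simp only [edges, Finset.mem_filter, Finset.mem_univ, true_and] at ha hb
    rcases ha with ha | ha <;> rcases hb with hb | hb
    · exact hinj (ha.trans hb.symm)
    · exact absurd (by rw [ha, hb]) (hor a b)
    · exact absurd (by rw [ha, hb]) (hor a b)
    · exact hinj (ha.trans hb.symm)
  constructor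
  · intro hodd
    obtain ⟨j, hj⟩ := Finset.card_pos.1 hodd.pos
    simp only [edges, Finset.mem_filter, Finset.mem_univ, true_and] at hj
    exact ⟨hw, hj.symm.imp (⟨j, ·⟩) (⟨j, ·⟩)⟩
  · rintro ⟨-, ⟨j, hj⟩ | ⟨j, hj⟩⟩ <;>
    · have hpos : 0 < edges.card := Finset.card_pos.2 ⟨j, by simp [edges, hj]⟩
      rw [show edges.card = 1 by omega]
      exact odd_one

noncomputable def inflWord (u : V) : V ⊕ (Fin m × Fin (2 * d)) → Pauli :=
  indepWord (inflGraph m d e) (inflGenSupport m d e u)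

theorem inflGen_eq_pauliProd [Fintype V] (hloop : ∀ j, (e j).1 ≠ (e j).2) (u : V) :
    inflGen m d e u = pauliProd (inflWord m d e u) := by
  rw [inflGen_eq_list_prod,
    list_prod_graphGen_of_isIndepSet _ (isIndepSet_inflGenSupport m d e hloop u), inflWord]

theorem inflWord_inl (hd : 0 < d) (hloop : ∀ j, (e j).1 ≠ (e j).2)
    (hinj : Function.Injective e) (hor : ∀ j j', e j ≠ ((e j').2, (e j').1)) (u w : V) :
    inflWord m d e u (.inl w) = graphWord (origGraph m e) u w := by
  have hcount : (inflGenSupport m d e u).countP (· = .inl w) = if w = u then 1 else 0 := by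
    rw [inflGenSupport, List.countP_cons, List.countP_eq_zero.2]
    · simp [eq_comm]
    · intro c hc
      obtain ⟨j, -, hj⟩ := List.mem_flatMap.1 hc
      split_ifs at hj
      · obtain ⟨s, -, rfl⟩ := List.mem_map.1 hj
        simp
      · simp at hj
  rw [inflWord, indepWord, graphWord, hcount, countP_adj_inl_inflGenSupport m d e hd hloop]
  by_cases hw : w = u
  · simp [hw]
  · simp only [hw, if_false, Nat.not_odd_zero, odd_sum_edge_indicator_iff m e hinj hor hw]

theorem inflWord_inr (hloop : ∀ j, (e j).1 ≠ (e j).2) (u : V) (c : Fin m × Fin (2 * d)) :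
    inflWord m d e u (.inr c) = .X ∨ inflWord m d e u (.inr c) = .I := by
  have heven := even_countP_adj_inr_inflGenSupport m d e hloop u c.1 c.2
  rw [inflWord, indepWord, if_neg (Nat.not_odd_iff_even.2 heven)]
  split_ifs <;> simp

end Inflation

theorem stmt9_general {V : Type} [Fintype V] [LinearOrder V] (m d : ℕ) (hd : 0 < d)
    (e : Fin m → V × V)
    (hloop : ∀ j, (e j).1 ≠ (e j).2)
    (hinj : Function.Injective e)
    (hor : ∀ j j', e j ≠ ((e j').2, (e j').1))
    (U : Finset V) (χ : ℤ) (σ : V → Pauli)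
    (hS : ((U.sort (· ≤ ·)).map (graphGen (origGraph m e))).prod = (χ : ℂ) • pauliProd σ) :
    ∃ σ' : (V ⊕ (Fin m × Fin (2 * d))) → Pauli,
      ((U.sort (· ≤ ·)).map (inflGen m d e)).prod = (χ : ℂ) • pauliProd σ' ∧
      (∀ u : V, σ' (Sum.inl u) = σ u) ∧
      (∀ c : Fin m × Fin (2 * d), σ' (Sum.inr c) = Pauli.X ∨ σ' (Sum.inr c) = Pauli.I) := by
  set L := U.sort (· ≤ ·)
  choose τ hτ hτXI using fun c =>
    exists_list_prod_pauliMat_eq_X_or_I L (inflWord m d e · (.inr c)) fun u _ =>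
      inflWord_inr m d e hloop u c
  refine ⟨Sum.elim σ τ, ?_, fun _ => rfl, hτXI⟩
  have horig : piKron (fun w => (L.map fun u => pauliMat (graphWord (origGraph m e) u w)).prod) =
      (χ : ℂ) • piKron fun w => pauliMat (σ w) := by
    rw [← list_prod_map_piKron]
    exact hS
  calc (L.map (inflGen m d e)).prod
      = piKron fun v => (L.map fun u => pauliMat (inflWord m d e u v)).prod := by
        rw [List.map_congr_left fun u _ => inflGen_eq_pauliProd m d e hloop u]
        exact list_prod_map_piKron L fun u v => pauliMat (inflWord m d e u v)
    _ = piKron (Sum.elim (fun w => (L.map fun u => pauliMat (graphWord (origGraph m e) u w)).prod)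
          fun c => pauliMat (τ c)) := by
        congr 1
        funext v
        rcases v with w | c
        · simp only [inflWord_inl m d e hd hloop hinj hor, Sum.elim_inl]
        · exact hτ c
    _ = (χ : ℂ) • pauliProd (Sum.elim σ τ) := by
        rw [piKron_sumElim_eq_smul horig, pauliProd_eq_piKron]
        congr 2
        funext v
        rcases v with w | c <;> rfl

/-- Lemma 2: the inflated stabilizer element `S' = ∏_{u∈U} f_u` has the same sign
`χ` as `S = ∏_{u∈U} g_u`, agrees with `S`'s Pauli operators on power vertices, and
is `X` or `I` on every chain vertex. -/
theorem stmt9 {V : Type} [Fintype V] [LinearOrder V] (m d : ℕ) (hd : 0 < d)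
    (e : Fin m → V × V)
    (hloop : ∀ j, (e j).1 ≠ (e j).2)
    (hinj : Function.Injective e)
    (hor : ∀ j j', e j ≠ ((e j').2, (e j').1))
    (U : Finset V) (χ : ℤ) (hχ : χ = 1 ∨ χ = -1) (σ : V → Pauli)
    (hS : ((U.sort (· ≤ ·)).map (graphGen (origGraph m e))).prod = (χ : ℂ) • pauliProd σ) :
    ∃ σ' : (V ⊕ (Fin m × Fin (2 * d))) → Pauli,
      ((U.sort (· ≤ ·)).map (inflGen m d e)).prod = (χ : ℂ) • pauliProd σ' ∧
      (∀ u : V, σ' (Sum.inl u) = σ u) ∧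
      (∀ c : Fin m × Fin (2 * d), σ' (Sum.inr c) = Pauli.X ∨ σ' (Sum.inr c) = Pauli.I) :=
  stmt9_general m d hd e hloop hinj hor U χ σ hS
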